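/- arXiv:1103.1170 — 2 statements merged into one kernel-verified Lean document; each statement's English description precedes it below -/
import Mathlib

section
/- Let f: ℝ → ℝ be Lipschitz with constant L. Then the map X ↦ f(X), defined via the functional calculus on real symmetric (or Hermitian) N×N matrices, is Lipschitz with constant L with respect to the Hilbert–Schmidt norm: ‖f(X) - f(Y)‖_HS ≤ L·‖X - Y‖_HS. Consequently, each matrix entry f(X)_{ij} is a Lipschitz function of the entries of X (in Hilbert–Schmidt norm) with the same constant L. -/
/-!
Diagonalize `X = U Λ U*` and `Y = V M V*` and put `W = U* V`. Since the Hilbert–Schmidt norm is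
unitarily invariant, `‖g(X) - g(Y)‖_HS = ‖g(Λ) W - W g(M)‖_HS` for every `g`, and the `(i, j)`
entry of `g(Λ) W - W g(M)` is `(g(λᵢ) - g(μⱼ)) Wᵢⱼ`. For `g = f` each entry is therefore at most
`L` times the corresponding entry for `g = id`, which gives the bound; a single entry of a matrix
is bounded by its Hilbert–Schmidt norm.
-/

open Matrix

/-- Hilbert–Schmidt (Frobenius) norm of a complex matrix. -/
noncomputable def hsNorm {N : ℕ} (A : Matrix (Fin N) (Fin N) ℂ) : ℝ :=
  Real.sqrt (∑ i, ∑ j, ‖A i j‖ ^ 2)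

theorem unitary_conj_sub_unitary_conj {R : Type*} [Ring R] [StarMul R] (U V : unitary R)
    (a b : R) :
    (U : R) * a * star (U : R) - V * b * star (V : R) =
      U * (a * (star (U : R) * V) - star (U : R) * V * b) * star (V : R) := by
  have hU : (U : R) * star (U : R) = 1 := Unitary.coe_mul_star_self U
  have hV : (V : R) * star (V : R) = 1 := Unitary.coe_mul_star_self V
  simp only [mul_sub, sub_mul, mul_assoc]
  rw [hV, mul_one, ← mul_assoc (U : R) (star (U : R)), hU, one_mul]

namespace Matrix

open scoped Matrix.Norms.Frobenius

variable {m n 𝕜 : Type*} [Fintype m] [Fintype n] [RCLike 𝕜]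

theorem frobenius_norm_sq (A : Matrix m n 𝕜) : ‖A‖ ^ 2 = ∑ i, ∑ j, ‖A i j‖ ^ 2 := by
  rw [frobenius_norm_def, ← Real.rpow_natCast, ← Real.rpow_mul (by positivity)]
  norm_num

theorem norm_entry_le_frobenius_norm (A : Matrix m n 𝕜) (i : m) (j : n) : ‖A i j‖ ≤ ‖A‖ := by
  refine (pow_le_pow_iff_left₀ (norm_nonneg _) (norm_nonneg _) two_ne_zero).mp ?_
  rw [frobenius_norm_sq]
  calc ‖A i j‖ ^ 2 ≤ ∑ l, ‖A i l‖ ^ 2 :=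
        Finset.single_le_sum (f := fun l => ‖A i l‖ ^ 2) (fun _ _ => by positivity)
          (Finset.mem_univ j)
    _ ≤ ∑ k, ∑ l, ‖A k l‖ ^ 2 :=
        Finset.single_le_sum (f := fun k => ∑ l, ‖A k l‖ ^ 2) (fun _ _ => by positivity)
          (Finset.mem_univ i)

theorem frobenius_norm_le_of_norm_entry_le {A B : Matrix m n 𝕜} {c : ℝ} (hc : 0 ≤ c)
    (h : ∀ i j, ‖B i j‖ ≤ c * ‖A i j‖) : ‖B‖ ≤ c * ‖A‖ := by
  refine (pow_le_pow_iff_left₀ (norm_nonneg _) (by positivity) two_ne_zero).mp ?_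
  rw [mul_pow, frobenius_norm_sq, frobenius_norm_sq, Finset.mul_sum]
  refine Finset.sum_le_sum fun i _ => ?_
  rw [Finset.mul_sum]
  refine Finset.sum_le_sum fun j _ => ?_
  rw [← mul_pow]
  exact pow_le_pow_left₀ (norm_nonneg _) (h i j) 2

theorem frobenius_norm_sq_eq_trace (A : Matrix m n 𝕜) :
    ((‖A‖ ^ 2 : ℝ) : 𝕜) = trace (Aᴴ * A) := by
  simp only [frobenius_norm_sq, trace, diag, mul_apply, conjTranspose_apply, RCLike.star_def,
    RCLike.conj_mul]
  push_cast
  exact Finset.sum_comm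

theorem frobenius_norm_unitary_mul [DecidableEq m] (U : unitaryGroup m 𝕜) (A : Matrix m n 𝕜) :
    ‖(U : Matrix m m 𝕜) * A‖ = ‖A‖ := by
  have hsq : ‖(U : Matrix m m 𝕜) * A‖ ^ 2 = ‖A‖ ^ 2 := by
    refine RCLike.ofReal_injective (K := 𝕜) ?_
    rw [frobenius_norm_sq_eq_trace, frobenius_norm_sq_eq_trace, conjTranspose_mul,
      ← star_eq_conjTranspose (U : Matrix m m 𝕜), Matrix.mul_assoc,
      ← Matrix.mul_assoc (star (U : Matrix m m 𝕜)), Unitary.coe_star_mul_self, Matrix.one_mul]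
  exact (pow_left_inj₀ (norm_nonneg _) (norm_nonneg _) two_ne_zero).mp hsq

theorem frobenius_norm_mul_unitary [DecidableEq n] (A : Matrix m n 𝕜) (U : unitaryGroup n 𝕜) :
    ‖A * (U : Matrix n n 𝕜)‖ = ‖A‖ := by
  rw [← frobenius_norm_conjTranspose, conjTranspose_mul, ← star_eq_conjTranspose (U : Matrix n n 𝕜),
    ← Unitary.coe_star, frobenius_norm_unitary_mul, frobenius_norm_conjTranspose]

theorem diagonal_mul_sub_mul_diagonal_apply [DecidableEq n] (a b : n → 𝕜) (W : Matrix n n 𝕜)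
    (i j : n) : (diagonal a * W - W * diagonal b) i j = (a i - b j) * W i j := by
  simp only [sub_apply, diagonal_mul, mul_diagonal]
  ring

namespace IsHermitian

variable [DecidableEq n] {A B : Matrix n n 𝕜}

theorem cfc_id (hA : A.IsHermitian) : hA.cfc id = A :=
  hA.spectral_theorem.symm

theorem frobenius_norm_cfc_sub_cfc (hA : A.IsHermitian) (hB : B.IsHermitian) (g : ℝ → ℝ) :
    ‖hA.cfc g - hB.cfc g‖ = ‖diagonal (RCLike.ofReal ∘ g ∘ hA.eigenvalues) *
      (star (hA.eigenvectorUnitary : Matrix n n 𝕜) * (hB.eigenvectorUnitary : Matrix n n 𝕜))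
      - (star (hA.eigenvectorUnitary : Matrix n n 𝕜) * (hB.eigenvectorUnitary : Matrix n n 𝕜)) *
        diagonal (RCLike.ofReal ∘ g ∘ hB.eigenvalues)‖ := by
  rw [IsHermitian.cfc, IsHermitian.cfc, Unitary.conjStarAlgAut_apply,
    Unitary.conjStarAlgAut_apply, unitary_conj_sub_unitary_conj,
    ← Unitary.coe_star (U := hB.eigenvectorUnitary), frobenius_norm_mul_unitary,
    frobenius_norm_unitary_mul]

theorem frobenius_norm_cfc_sub_cfc_le (hA : A.IsHermitian) (hB : B.IsHermitian) {f : ℝ → ℝ}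
    {K : NNReal} (hf : LipschitzWith K f) : ‖hA.cfc f - hB.cfc f‖ ≤ K * ‖A - B‖ := by
  conv_rhs => rw [← hA.cfc_id, ← hB.cfc_id]
  rw [frobenius_norm_cfc_sub_cfc, frobenius_norm_cfc_sub_cfc]
  refine frobenius_norm_le_of_norm_entry_le K.2 fun i j => ?_
  rw [diagonal_mul_sub_mul_diagonal_apply, diagonal_mul_sub_mul_diagonal_apply]
  simp only [Function.comp_apply, id, ← RCLike.ofReal_sub, norm_mul, RCLike.norm_ofReal,
    ← mul_assoc, ← Real.dist_eq]
  exact mul_le_mul_of_nonneg_right (hf.dist_le_mul _ _) (norm_nonneg _)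

end IsHermitian

theorem hsNorm_eq_frobenius_norm {N : ℕ} (A : Matrix (Fin N) (Fin N) ℂ) : hsNorm A = ‖A‖ := by
  rw [hsNorm, ← frobenius_norm_sq, Real.sqrt_sq (norm_nonneg _)]

end Matrix

open scoped Matrix.Norms.Frobenius in
/-- If `f : ℝ → ℝ` is Lipschitz with constant `L`, then the functional calculus
`X ↦ f(X)` on Hermitian matrices is Lipschitz with constant `L` in Hilbert–Schmidt norm;
consequently each entry of `f(X) - f(Y)` is bounded by `L·‖X - Y‖_HS`. -/
theorem lipschitz_functional_calculus (N : ℕ) (f : ℝ → ℝ) (L : ℝ)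
    (hf : ∀ x y : ℝ, |f x - f y| ≤ L * |x - y|)
    (X Y : Matrix (Fin N) (Fin N) ℂ) (hX : X.IsHermitian) (hY : Y.IsHermitian) :
    hsNorm (hX.cfc f - hY.cfc f) ≤ L * hsNorm (X - Y) ∧
    ∀ i j : Fin N, ‖(hX.cfc f - hY.cfc f) i j‖ ≤ L * hsNorm (X - Y) := by
  have hL : 0 ≤ L := (abs_nonneg _).trans (by simpa using hf 0 1)
  have hlip : LipschitzWith ⟨L, hL⟩ f := LipschitzWith.of_dist_le_mul fun x y => by
    rw [Real.dist_eq, Real.dist_eq]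
    exact hf x y
  have hHS : ‖hX.cfc f - hY.cfc f‖ ≤ L * ‖X - Y‖ := hX.frobenius_norm_cfc_sub_cfc_le hY hlip
  simp only [hsNorm_eq_frobenius_norm]
  exact ⟨hHS, fun i j => (norm_entry_le_frobenius_norm _ i j).trans hHS⟩
end

section
/- Let f ∈ C_c^∞(ℝ) and define the almost-analytic extension f̃(x + iy) = (Σ_{n=0}^{6} f^{(n)}(x)(iy)ⁿ/n!)·σ(y), where σ ∈ C^∞(ℝ) is a cutoff equal to 1 for |y| ≤ 1/2 and 0 for |y| ≥ 1. Then |∂f̃/∂z̄(x + iy)| ≤ C·max_{0≤k≤7} sup|f^{(k)}|·|y|⁶ for a constant C independent of f, where ∂/∂z̄ = (∂/∂x + i∂/∂y)/2. -/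
open Complex

/-- The almost-analytic extension `f̃(x+iy) = (Σ_{n=0}^{6} f⁽ⁿ⁾(x)(iy)ⁿ/n!)·σ(y)`,
as a function of the real and imaginary parts. -/
noncomputable def almostAnalyticExt (f : ℝ → ℝ) (σc : ℝ → ℝ) (x y : ℝ) : ℂ :=
  (∑ n ∈ Finset.range 7, (Complex.ofReal (iteratedDeriv n f x)) * (Complex.I * y) ^ n / (n.factorial : ℂ))
    * (Complex.ofReal (σc y))

/-- For `f ∈ C_c⁷(ℝ)` and the almost-analytic extension of order 6 with cutoff `σ`,
`|∂f̃/∂z̄(x+iy)| ≤ C · max_{0≤k≤7} sup|f⁽ᵏ⁾| · |y|⁶` with `C` independent of `f`. -/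
theorem almost_analytic_extension_dbar_bound (σc : ℝ → ℝ)
    (hσc : ContDiff ℝ (⊤ : ℕ∞) σc)
    (hσc1 : ∀ y : ℝ, |y| ≤ 1 / 2 → σc y = 1)
    (hσc0 : ∀ y : ℝ, 1 ≤ |y| → σc y = 0) :
    ∃ C > 0, ∀ f : ℝ → ℝ, ContDiff ℝ 7 f → HasCompactSupport f →
      ∀ M : ℝ, (∀ k ≤ 7, ∀ t : ℝ, |iteratedDeriv k f t| ≤ M) →
      ∀ x y : ℝ,
        ‖(1 / 2 : ℂ) * (deriv (fun t : ℝ => almostAnalyticExt f σc t y) x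
            + Complex.I * deriv (fun t : ℝ => almostAnalyticExt f σc x t) y)‖
          ≤ C * M * |y| ^ 6 := by
  -- boundedness of σ and its derivative
  have hsupp : HasCompactSupport σc := by
    apply HasCompactSupport.intro (isCompact_Icc (a := (-1:ℝ)) (b := 1))
    intro y hy
    apply hσc0
    simp only [Set.mem_Icc, not_and, not_le] at hy
    rcases le_or_gt (-1) y with h | h
    · have := hy h; rw [abs_of_pos (by linarith)]; linarith
    · rw [abs_of_neg (by linarith)]; linarith
  obtain ⟨B1, hB1⟩ := hsupp.exists_bound_of_continuous hσc.continuous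
  have hdc : Continuous (deriv σc) := hσc.continuous_deriv (by exact_mod_cast le_top)
  obtain ⟨B2, hB2⟩ := hsupp.deriv.exists_bound_of_continuous hdc
  have hB1' : ∀ t : ℝ, |σc t| ≤ max B1 1 := fun t => le_trans (hB1 t) (le_max_left _ _)
  have hB2' : ∀ t : ℝ, |deriv σc t| ≤ max B2 1 := fun t => le_trans (hB2 t) (le_max_left _ _)
  -- support facts for deriv σc
  have hσ'small : ∀ t : ℝ, |t| < 1/2 → deriv σc t = 0 := by
    intro t ht
    have hev : σc =ᶠ[nhds t] fun _ => (1:ℝ) := by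
      have : Set.Ioo (-(1/2:ℝ)) (1/2) ∈ nhds t := by
        apply Ioo_mem_nhds <;> cases abs_lt.mp ht <;> linarith [abs_lt.mp ht]
      filter_upwards [this] with s hs
      exact hσc1 s (by rw [abs_le]; exact ⟨le_of_lt hs.1, le_of_lt hs.2⟩)
    rw [hev.deriv_eq]; simp
  have hσ'big : ∀ t : ℝ, deriv σc t ≠ 0 → |t| ≤ 1 := by
    intro t ht
    have : t ∈ tsupport σc := support_deriv_subset (by simpa using ht)
    have hsub : tsupport σc ⊆ Set.Icc (-1:ℝ) 1 := by
      apply closure_minimal _ isClosed_Icc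
      intro s hs
      rcases le_or_gt s 1 with h1 | h1
      · rcases le_or_gt (-1) s with h2 | h2
        · exact ⟨h2, h1⟩
        · exact absurd (hσc0 s (by rw [abs_of_neg (by linarith)]; linarith)) hs
      · exact absurd (hσc0 s (by rw [abs_of_pos (by linarith)]; linarith)) hs
    have := hsub this
    rw [abs_le]; exact ⟨this.1, this.2⟩
  refine ⟨max B1 1 + 448 * max B2 1, by positivity, ?_⟩
  intro f hf _hfc M hM x y
  have hM0 : 0 ≤ M := le_trans (abs_nonneg _) (hM 0 (by norm_num) 0)
  -- the x-derivative
  have hdx : deriv (fun t : ℝ => almostAnalyticExt f σc t y) x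
      = (∑ n ∈ Finset.range 7, (Complex.ofReal (iteratedDeriv (n+1) f x)) * (Complex.I * y) ^ n / (n.factorial : ℂ))
          * (Complex.ofReal (σc y)) := by
    have hsum : HasDerivAt (fun t : ℝ => ∑ n ∈ Finset.range 7, (Complex.ofReal (iteratedDeriv n f t)) * (Complex.I * y) ^ n / (n.factorial : ℂ))
        (∑ n ∈ Finset.range 7, (Complex.ofReal (iteratedDeriv (n+1) f x)) * (Complex.I * y) ^ n / (n.factorial : ℂ)) x := by
      apply HasDerivAt.fun_sum
      intro n hn
      have hgn : HasDerivAt (iteratedDeriv n f) (iteratedDeriv (n+1) f x) x := by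
        rw [iteratedDeriv_succ]
        exact ((hf.differentiable_iteratedDeriv n (by exact_mod_cast Finset.mem_range.mp hn)) x).hasDerivAt
      exact (hgn.ofReal_comp.mul_const ((Complex.I * y) ^ n)).div_const (n.factorial : ℂ)
    exact (hsum.mul_const (Complex.ofReal (σc y))).deriv
  -- the y-derivative
  have hdy : deriv (fun t : ℝ => almostAnalyticExt f σc x t) y
      = (∑ n ∈ Finset.range 7, (Complex.ofReal (iteratedDeriv n f x)) * ((n:ℂ) * (Complex.I * y) ^ (n-1) * Complex.I) / (n.factorial : ℂ))
          * (Complex.ofReal (σc y))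
        + (∑ n ∈ Finset.range 7, (Complex.ofReal (iteratedDeriv n f x)) * (Complex.I * y) ^ n / (n.factorial : ℂ))
          * (Complex.ofReal (deriv σc y)) := by
    have hσd : HasDerivAt σc (deriv σc y) y := ((hσc.differentiable (by simp)) y).hasDerivAt
    have hsum : HasDerivAt (fun t : ℝ => ∑ n ∈ Finset.range 7, (Complex.ofReal (iteratedDeriv n f x)) * (Complex.I * t) ^ n / (n.factorial : ℂ))
        (∑ n ∈ Finset.range 7, (Complex.ofReal (iteratedDeriv n f x)) * ((n:ℂ) * (Complex.I * y) ^ (n-1) * Complex.I) / (n.factorial : ℂ)) y := by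
      apply HasDerivAt.fun_sum
      intro n _
      have h1 : HasDerivAt (fun z : ℂ => (Complex.I * z) ^ n) ((n:ℂ) * (Complex.I * (y:ℂ)) ^ (n-1) * Complex.I) (y : ℂ) := by
        simpa using ((hasDerivAt_id ((y:ℝ):ℂ)).const_mul Complex.I).fun_pow n
      exact ((h1.comp_ofReal).const_mul (Complex.ofReal (iteratedDeriv n f x))).div_const (n.factorial : ℂ)
    exact (hsum.mul hσd.ofReal_comp).deriv
  rw [hdx, hdy]
  -- the key algebraic identity
  have keysum : ∀ g : ℕ → ℂ,
      (∑ n ∈ Finset.range 7, (g (n+1)) * (Complex.I * y) ^ n / (n.factorial : ℂ))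
        + Complex.I * (∑ n ∈ Finset.range 7, (g n) * ((n:ℂ) * (Complex.I * y) ^ (n-1) * Complex.I) / (n.factorial : ℂ))
        = g 7 * (Complex.I * y) ^ 6 / 720 := by
    intro g
    simp only [Finset.sum_range_succ, Finset.sum_range_zero, Nat.factorial]
    push_cast
    ring_nf
    linear_combination (g 1 + g 2 * (Complex.I*y) + g 3 * (Complex.I*y)^2/2 + g 4 * (Complex.I*y)^3/6 + g 5 * (Complex.I*y)^4/24 + g 6 * (Complex.I*y)^5/120) * Complex.I_sq
  have key : (∑ n ∈ Finset.range 7, (Complex.ofReal (iteratedDeriv (n+1) f x)) * (Complex.I * y) ^ n / (n.factorial : ℂ))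
          * (Complex.ofReal (σc y))
        + Complex.I * ((∑ n ∈ Finset.range 7, (Complex.ofReal (iteratedDeriv n f x)) * ((n:ℂ) * (Complex.I * y) ^ (n-1) * Complex.I) / (n.factorial : ℂ))
          * (Complex.ofReal (σc y))
        + (∑ n ∈ Finset.range 7, (Complex.ofReal (iteratedDeriv n f x)) * (Complex.I * y) ^ n / (n.factorial : ℂ))
          * (Complex.ofReal (deriv σc y)))
      = (Complex.ofReal (iteratedDeriv 7 f x)) * (Complex.I * y) ^ 6 / 720 * (Complex.ofReal (σc y))
        + Complex.I * (∑ n ∈ Finset.range 7, (Complex.ofReal (iteratedDeriv n f x)) * (Complex.I * y) ^ n / (n.factorial : ℂ))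
          * (Complex.ofReal (deriv σc y)) := by
    have := keysum (fun n => Complex.ofReal (iteratedDeriv n f x))
    calc _ = ((∑ n ∈ Finset.range 7, (Complex.ofReal (iteratedDeriv (n+1) f x)) * (Complex.I * y) ^ n / (n.factorial : ℂ))
            + Complex.I * (∑ n ∈ Finset.range 7, (Complex.ofReal (iteratedDeriv n f x)) * ((n:ℂ) * (Complex.I * y) ^ (n-1) * Complex.I) / (n.factorial : ℂ)))
            * (Complex.ofReal (σc y))
          + Complex.I * (∑ n ∈ Finset.range 7, (Complex.ofReal (iteratedDeriv n f x)) * (Complex.I * y) ^ n / (n.factorial : ℂ))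
            * (Complex.ofReal (deriv σc y)) := by ring
    _ = _ := by rw [this]
  rw [key]
  -- now bound the two terms
  have hT1 : ‖(Complex.ofReal (iteratedDeriv 7 f x)) * (Complex.I * y) ^ 6 / 720 * (Complex.ofReal (σc y))‖
      ≤ M * |y| ^ 6 * max B1 1 := by
    have : ‖(Complex.ofReal (iteratedDeriv 7 f x)) * (Complex.I * y) ^ 6 / 720 * (Complex.ofReal (σc y))‖
        = |iteratedDeriv 7 f x| * |y| ^ 6 / 720 * |σc y| := by
      simp [norm_mul, norm_div, norm_pow, Complex.norm_real, Complex.norm_I, Complex.norm_real]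
    rw [this]
    have h7 : |iteratedDeriv 7 f x| ≤ M := hM 7 le_rfl x
    have hs := hB1' y
    have h0s : (0:ℝ) ≤ |σc y| := abs_nonneg _
    have h0y : (0:ℝ) ≤ |y| ^ 6 := by positivity
    calc |iteratedDeriv 7 f x| * |y| ^ 6 / 720 * |σc y|
        ≤ M * |y| ^ 6 / 720 * max B1 1 := by gcongr
      _ ≤ M * |y| ^ 6 * max B1 1 := by
          have : (0:ℝ) ≤ M * |y| ^ 6 * max B1 1 := by positivity
          nlinarith
  have hT2 : ‖Complex.I * (∑ n ∈ Finset.range 7, (Complex.ofReal (iteratedDeriv n f x)) * (Complex.I * y) ^ n / (n.factorial : ℂ))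
          * (Complex.ofReal (deriv σc y))‖
      ≤ 448 * max B2 1 * M * |y| ^ 6 := by
    by_cases hd0 : deriv σc y = 0
    · rw [hd0]; simp; positivity
    · have h12 : 1/2 ≤ |y| := by
        by_contra h
        exact hd0 (hσ'small y (by linarith))
      have hy1 : |y| ≤ 1 := hσ'big y hd0
      have hS : ‖∑ n ∈ Finset.range 7, (Complex.ofReal (iteratedDeriv n f x)) * (Complex.I * y) ^ n / (n.factorial : ℂ)‖ ≤ 7 * M := by
        calc ‖∑ n ∈ Finset.range 7, (Complex.ofReal (iteratedDeriv n f x)) * (Complex.I * y) ^ n / (n.factorial : ℂ)‖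
            ≤ ∑ n ∈ Finset.range 7, ‖(Complex.ofReal (iteratedDeriv n f x)) * (Complex.I * y) ^ n / (n.factorial : ℂ)‖ :=
              norm_sum_le _ _
          _ ≤ ∑ _n ∈ Finset.range 7, M := by
              apply Finset.sum_le_sum
              intro n hn
              have : ‖(Complex.ofReal (iteratedDeriv n f x)) * (Complex.I * y) ^ n / (n.factorial : ℂ)‖
                  = |iteratedDeriv n f x| * |y| ^ n / (n.factorial : ℝ) := by
                simp [norm_mul, norm_div, norm_pow, Complex.norm_real, Complex.norm_natCast]
              rw [this]
              have h1 : |iteratedDeriv n f x| ≤ M := hM n (le_of_lt (by exact_mod_cast Finset.mem_range.mp hn)) x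
              have h2 : |y| ^ n ≤ 1 := pow_le_one₀ (abs_nonneg y) hy1
              have h3 : (1:ℝ) ≤ (n.factorial : ℝ) := by exact_mod_cast n.factorial_pos
              calc |iteratedDeriv n f x| * |y| ^ n / (n.factorial : ℝ)
                  ≤ M * 1 / 1 := by gcongr
                _ = M := by ring
          _ = 7 * M := by simp [Finset.sum_const]
      have h64 : (1:ℝ) ≤ 64 * |y| ^ 6 := by
        have hp : (1/2:ℝ)^6 ≤ |y|^6 := pow_le_pow_left₀ (by norm_num) h12 6
        norm_num at hp; linarith
      have : ‖Complex.I * (∑ n ∈ Finset.range 7, (Complex.ofReal (iteratedDeriv n f x)) * (Complex.I * y) ^ n / (n.factorial : ℂ))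
          * (Complex.ofReal (deriv σc y))‖
          = ‖∑ n ∈ Finset.range 7, (Complex.ofReal (iteratedDeriv n f x)) * (Complex.I * y) ^ n / (n.factorial : ℂ)‖ * |deriv σc y| := by
        simp [norm_mul, Complex.norm_real]
      rw [this]
      have hs := hB2' y
      calc ‖∑ n ∈ Finset.range 7, (Complex.ofReal (iteratedDeriv n f x)) * (Complex.I * y) ^ n / (n.factorial : ℂ)‖ * |deriv σc y|
          ≤ (7 * M) * max B2 1 := mul_le_mul hS hs (abs_nonneg _) (by positivity)
        _ = (7 * M) * max B2 1 * 1 := by ring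
        _ ≤ (7 * M) * max B2 1 * (64 * |y| ^ 6) := by
            apply mul_le_mul_of_nonneg_left h64; positivity
        _ = 448 * max B2 1 * M * |y| ^ 6 := by ring
  calc ‖(1 / 2 : ℂ) * ((Complex.ofReal (iteratedDeriv 7 f x)) * (Complex.I * y) ^ 6 / 720 * (Complex.ofReal (σc y))
        + Complex.I * (∑ n ∈ Finset.range 7, (Complex.ofReal (iteratedDeriv n f x)) * (Complex.I * y) ^ n / (n.factorial : ℂ))
          * (Complex.ofReal (deriv σc y)))‖
      ≤ 1/2 * (M * |y| ^ 6 * max B1 1 + 448 * max B2 1 * M * |y| ^ 6) := by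
        rw [norm_mul]
        have : ‖(1/2 : ℂ)‖ = 1/2 := by norm_num
        rw [this]
        apply mul_le_mul_of_nonneg_left _ (by norm_num)
        exact le_trans (norm_add_le _ _) (add_le_add hT1 hT2)
    _ ≤ (max B1 1 + 448 * max B2 1) * M * |y| ^ 6 := by
        have h1 : (0:ℝ) ≤ M * |y|^6 := by positivity
        have h2 : (1:ℝ) ≤ max B2 1 := le_max_right _ _
        have h3 : (1:ℝ) ≤ max B1 1 := le_max_right _ _
        nlinarith
end
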